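/- arXiv:1502.03496 — 7 statements merged into one kernel-verified Lean document; each statement's English description precedes it below -/
import Mathlib

section
/- Let D be an n×n positive definite diagonal matrix and A a symmetric n×n matrix. If 0 ⪯ A (A is positive semidefinite) and (1-ε)(D - A) ⪯ D - Ã ⪯ (1+ε)(D - A) for some symmetric matrix Ã and ε ≥ 0, then (1-ε)(D + A) ⪯ D + Ã ⪯ (1+ε)(D + A). -/
/-
Adding `2εA ⪰ 0` to each side of the hypothesis turns it into the conclusion:
`(D + Ã) - (1 - ε)(D + A) = ((1 + ε)(D - A) - (D - Ã)) + 2εA` and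
`(1 + ε)(D + A) - (D + Ã) = ((D - Ã) - (1 - ε)(D - A)) + 2εA`.
-/

open Matrix

def SpectralApprox {k M : Type*} [Ring k] [AddCommGroup M] [Module k M] [LE M]
    (ε : k) (x y : M) : Prop :=
  (1 - ε) • y ≤ x ∧ x ≤ (1 + ε) • y

theorem SpectralApprox.add_of_sub {k M : Type*} [CommRing k] [PartialOrder k] [IsOrderedRing k]
    [AddCommGroup M] [PartialOrder M] [IsOrderedAddMonoid M] [Module k M] [PosSMulMono k M]
    {ε : k} {d a b : M} (hε : 0 ≤ ε) (ha : 0 ≤ a) (h : SpectralApprox ε (d - b) (d - a)) :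
    SpectralApprox ε (d + b) (d + a) := by
  have h2εa : 0 ≤ (2 * ε) • a := smul_nonneg (mul_nonneg zero_le_two hε) ha
  obtain ⟨hlow, hup⟩ := h
  rw [← sub_nonneg] at hlow hup
  constructor <;> rw [← sub_nonneg]
  · have key : d + b - (1 - ε) • (d + a) = ((1 + ε) • (d - a) - (d - b)) + (2 * ε) • a := by
      module
    exact key ▸ add_nonneg hup h2εa
  · have key : (1 + ε) • (d + a) - (d + b) = ((d - b) - (1 - ε) • (d - a)) + (2 * ε) • a := by
      module
    exact key ▸ add_nonneg hlow h2εa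

theorem stmt_3_general (n : ℕ) (D A At : Matrix (Fin n) (Fin n) ℝ)
    (ε : ℝ) (hε : 0 ≤ ε)
    (hApsd : A.PosSemidef)
    (h1 : ((D - At) - (1 - ε) • (D - A)).PosSemidef)
    (h2 : ((1 + ε) • (D - A) - (D - At)).PosSemidef) :
    ((D + At) - (1 - ε) • (D + A)).PosSemidef ∧
      ((1 + ε) • (D + A) - (D + At)).PosSemidef :=
  -- In the Loewner order `X ≤ Y` unfolds to `(Y - X).PosSemidef`, so `h1`, `h2` and the goal fit as is.
  open scoped MatrixOrder in
  SpectralApprox.add_of_sub hε (nonneg_iff_posSemidef.mpr hApsd) ⟨h1, h2⟩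

theorem stmt_3 (n : ℕ) (D A At : Matrix (Fin n) (Fin n) ℝ)
    (hD : D.PosDef) (hDdiag : D.IsDiag) (hA : A.IsSymm) (hAt : At.IsSymm)
    (ε : ℝ) (hε : 0 ≤ ε)
    (hApsd : A.PosSemidef)
    (h1 : ((D - At) - (1 - ε) • (D - A)).PosSemidef)
    (h2 : ((1 + ε) • (D - A) - (D - At)).PosSemidef) :
    ((D + At) - (1 - ε) • (D + A)).PosSemidef ∧
      ((1 + ε) • (D + A) - (D + At)).PosSemidef :=
  stmt_3_general n D A At ε hε hApsd h1 h2
end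

section
/- Let D be an n×n positive definite diagonal matrix and A, Ã symmetric n×n matrices. If (1-ε)(D - A) ⪯ D - Ã ⪯ (1+ε)(D - A) and (1-ε)(D + A) ⪯ D + Ã ⪯ (1+ε)(D + A) for some 0 ≤ ε < 1, then (1-ε)(D - A D⁻¹ A) ⪯ D - Ã D⁻¹ Ã ⪯ (1+ε)(D - A D⁻¹ A). -/
/-!
`D - A D⁻¹ A` is the Schur complement of the block matrix `[[D, A], [A, D]]`, whose quadratic form
at `(y, x)` is `((y + x)ᵀ (D + A) (y + x) + (y - x)ᵀ (D - A) (y - x)) / 2`. The hypotheses thus say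
that `[[D, Ã], [Ã, D]]` approximates `[[D, A], [A, D]]` in the Loewner order, and Schur complements
preserve such approximations since `xᵀ (D - A D⁻¹ A) x` is the minimum over `y` of that form.
-/

namespace Matrix

variable {m n : Type*} [Fintype m] [Fintype n] [DecidableEq m]

theorem PosDef.schur_le_dotProduct_fromBlocks {P : Matrix m m ℝ} (hP : P.PosDef)
    (B : Matrix m n ℝ) (C : Matrix n n ℝ) (x : m → ℝ) (y : n → ℝ) :
    star y ⬝ᵥ ((C - Bᴴ * P⁻¹ * B) *ᵥ y) ≤ star (x ⊕ᵥ y) ⬝ᵥ (fromBlocks P B Bᴴ C *ᵥ (x ⊕ᵥ y)) := by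
  have := hP.isUnit.invertible
  rw [dotProduct_mulVec (star (x ⊕ᵥ y)), schur_complement_eq₁₁ B C x y hP.isHermitian,
    ← dotProduct_mulVec, ← dotProduct_mulVec]
  exact le_add_of_nonneg_left (hP.posSemidef.dotProduct_mulVec_nonneg _)

theorem PosDef.dotProduct_fromBlocks_eq_schur {P : Matrix m m ℝ} (hP : P.PosDef)
    (B : Matrix m n ℝ) (C : Matrix n n ℝ) (y : n → ℝ) :
    star (-((P⁻¹ * B) *ᵥ y) ⊕ᵥ y) ⬝ᵥ (fromBlocks P B Bᴴ C *ᵥ (-((P⁻¹ * B) *ᵥ y) ⊕ᵥ y)) =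
      star y ⬝ᵥ ((C - Bᴴ * P⁻¹ * B) *ᵥ y) := by
  have := hP.isUnit.invertible
  rw [dotProduct_mulVec, schur_complement_eq₁₁ B C _ y hP.isHermitian, neg_add_cancel,
    dotProduct_zero, zero_add, dotProduct_mulVec]

theorem PosSemidef.smul_schur_sub_smul_schur {P P' : Matrix m m ℝ} {B B' : Matrix m n ℝ}
    {C C' : Matrix n n ℝ} {a b : ℝ}
    (h : (a • fromBlocks P' B' B'ᴴ C' - b • fromBlocks P B Bᴴ C).PosSemidef)
    (hP : P.PosDef) (hP' : P'.PosDef) (hb : 0 ≤ b) :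
    (a • (C' - B'ᴴ * P'⁻¹ * B') - b • (C - Bᴴ * P⁻¹ * B)).PosSemidef := by
  have hC : (a • C' - b • C).IsHermitian := by
    have := h.isHermitian
    simp only [fromBlocks_smul, sub_eq_add_neg, fromBlocks_neg, fromBlocks_add,
      isHermitian_fromBlocks_iff] at this
    exact this.2.2.2
  have hS' := isHermitian_conjTranspose_mul_mul B' hP'.isHermitian.inv
  have hS := isHermitian_conjTranspose_mul_mul B hP.isHermitian.inv
  refine .of_dotProduct_mulVec_nonneg ?_ fun y => ?_
  · convert (hC.sub (hS'.smul (.all a))).add (hS.smul (.all b)) using 1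
    module
  · -- `(-P'⁻¹ B' y, y)` minimises the `P'` block form; the `P` one is only bounded below there
    have hN := hP'.dotProduct_fromBlocks_eq_schur B' C' y
    have hM := hP.schur_le_dotProduct_fromBlocks B C (-((P'⁻¹ * B') *ᵥ y)) y
    have hv := h.dotProduct_mulVec_nonneg (-((P'⁻¹ * B') *ᵥ y) ⊕ᵥ y)
    generalize C' - B'ᴴ * P'⁻¹ * B' = S' at *
    generalize C - Bᴴ * P⁻¹ * B = S at *
    simp only [sub_mulVec, smul_mulVec, dotProduct_sub, dotProduct_smul, smul_eq_mul, hN] at hv ⊢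
    nlinarith [mul_le_mul_of_nonneg_left hM hb]

theorem PosSemidef.fromBlocks_of_add_of_sub [DecidableEq n] {P Q : Matrix n n ℝ}
    (hadd : (P + Q).PosSemidef) (hsub : (P - Q).PosSemidef) :
    (fromBlocks P Q Q P).PosSemidef := by
  let U : Matrix n (n ⊕ n) ℝ := fromCols 1 1
  let V : Matrix n (n ⊕ n) ℝ := fromCols 1 (-1)
  have key : fromBlocks P Q Q P = (2 : ℝ)⁻¹ • (Uᴴ * (P + Q) * U + Vᴴ * (P - Q) * V) := by
    simp only [U, V, conjTranspose_fromCols_eq_fromRows_conjTranspose]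
    rw [fromRows_mul, fromRows_mul_fromCols, fromRows_mul, fromRows_mul_fromCols, fromBlocks_add,
      fromBlocks_smul]
    congr 1 <;> simp <;> module
  rw [key]
  exact ((hadd.conjTranspose_mul_mul_same _).add (hsub.conjTranspose_mul_mul_same _)).smul
    (by norm_num)

theorem PosSemidef.smul_fromBlocks_sub_smul_fromBlocks [DecidableEq n] {a b : ℝ}
    {P Q P' Q' : Matrix n n ℝ} (hadd : (a • (P + Q) - b • (P' + Q')).PosSemidef)
    (hsub : (a • (P - Q) - b • (P' - Q')).PosSemidef) :
    (a • fromBlocks P Q Q P - b • fromBlocks P' Q' Q' P').PosSemidef := by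
  have hblock : a • fromBlocks P Q Q P - b • fromBlocks P' Q' Q' P' =
      fromBlocks (a • P - b • P') (a • Q - b • Q') (a • Q - b • Q') (a • P - b • P') := by
    simp only [fromBlocks_smul, sub_eq_add_neg, fromBlocks_neg, fromBlocks_add]
  rw [hblock]
  refine PosSemidef.fromBlocks_of_add_of_sub ?_ ?_
  · convert hadd using 1; module
  · convert hsub using 1; module

theorem PosSemidef.smul_sub_smul_sub_mul_inv_mul {P Q P' Q' : Matrix m m ℝ} {a b : ℝ}
    (hP : P.PosDef) (hP' : P'.PosDef) (hQ : Q.IsHermitian) (hQ' : Q'.IsHermitian) (hb : 0 ≤ b)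
    (hadd : (a • (P + Q) - b • (P' + Q')).PosSemidef)
    (hsub : (a • (P - Q) - b • (P' - Q')).PosSemidef) :
    (a • (P - Q * P⁻¹ * Q) - b • (P' - Q' * P'⁻¹ * Q')).PosSemidef := by
  have hlift := PosSemidef.smul_fromBlocks_sub_smul_fromBlocks hadd hsub
  rw [show fromBlocks P Q Q P = fromBlocks P Q Qᴴ P by rw [hQ.eq],
    show fromBlocks P' Q' Q' P' = fromBlocks P' Q' Q'ᴴ P' by rw [hQ'.eq]] at hlift
  have := hlift.smul_schur_sub_smul_schur hP' hP hb
  rwa [hQ.eq, hQ'.eq] at this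

end Matrix

open Matrix

theorem stmt_4_general (n : ℕ) (D A At : Matrix (Fin n) (Fin n) ℝ)
    (hD : D.PosDef) (hA : A.IsSymm) (hAt : At.IsSymm)
    (ε : ℝ) (hε1 : ε < 1)
    (h1 : ((D - At) - (1 - ε) • (D - A)).PosSemidef)
    (h2 : ((1 + ε) • (D - A) - (D - At)).PosSemidef)
    (h3 : ((D + At) - (1 - ε) • (D + A)).PosSemidef)
    (h4 : ((1 + ε) • (D + A) - (D + At)).PosSemidef) :
    ((D - At * D⁻¹ * At) - (1 - ε) • (D - A * D⁻¹ * A)).PosSemidef ∧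
      ((1 + ε) • (D - A * D⁻¹ * A) - (D - At * D⁻¹ * At)).PosSemidef := by
  have hA' : A.IsHermitian := isHermitian_iff_isSymm.mpr hA
  have hAt' : At.IsHermitian := isHermitian_iff_isSymm.mpr hAt
  constructor
  · simpa only [one_smul] using PosSemidef.smul_sub_smul_sub_mul_inv_mul (a := 1) hD hD hAt' hA'
      (by linarith) (by rwa [one_smul]) (by rwa [one_smul])
  · simpa only [one_smul] using PosSemidef.smul_sub_smul_sub_mul_inv_mul (b := 1) hD hD hA' hAt'
      zero_le_one (by rwa [one_smul]) (by rwa [one_smul])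

theorem stmt_4 (n : ℕ) (D A At : Matrix (Fin n) (Fin n) ℝ)
    (hD : D.PosDef) (hDdiag : D.IsDiag) (hA : A.IsSymm) (hAt : At.IsSymm)
    (ε : ℝ) (hε0 : 0 ≤ ε) (hε1 : ε < 1)
    (h1 : ((D - At) - (1 - ε) • (D - A)).PosSemidef)
    (h2 : ((1 + ε) • (D - A) - (D - At)).PosSemidef)
    (h3 : ((D + At) - (1 - ε) • (D + A)).PosSemidef)
    (h4 : ((1 + ε) • (D + A) - (D + At)).PosSemidef) :
    ((D - At * D⁻¹ * At) - (1 - ε) • (D - A * D⁻¹ * A)).PosSemidef ∧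
      ((1 + ε) • (D - A * D⁻¹ * A) - (D - At * D⁻¹ * At)).PosSemidef :=
  stmt_4_general n D A At hD hA hAt ε hε1 h1 h2 h3 h4
end

section
/- Let M and M̃ be symmetric positive definite n×n matrices partitioned conformally into 2×2 blocks with invertible (1,1)-blocks. If e^{-ε} M̃ ⪯ M ⪯ e^{ε} M̃ in the Loewner order, then the Schur complements of M and M̃ onto the second block satisfy e^{-ε} Schur(M̃) ⪯ Schur(M) ⪯ e^{ε} Schur(M̃). -/
/-!
For a Hermitian block matrix `M = [[A, B], [Bᴴ, D]]` with `A ≻ 0`, completing the square gives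
`(x, y)ᴴ M (x, y) = (x + A⁻¹ B y)ᴴ A (x + A⁻¹ B y) + yᴴ S(M) y` with `S(M) = D - Bᴴ A⁻¹ B`,
so `yᴴ S(M) y` is the minimum over `x` of the quadratic form of `M`. Hence `M ↦ S(M)` is monotone in the Loewner order,
and it is positively homogeneous, so the two-sided bound passes from `M` to `S(M)`.
-/

open Matrix
open scoped ComplexOrder MatrixOrder

namespace Matrix

variable {m n : Type*}

theorem schurComplement_smul {α : Type*} [Fintype m] [DecidableEq m] [Field α] [StarRing α]
    [TrivialStar α] {A : Matrix m m α} (B : Matrix m n α) (D : Matrix n n α) {c : α}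
    (hc : c ≠ 0) (hA : IsUnit A.det) :
    c • D - (c • B)ᴴ * (c • A)⁻¹ * (c • B) = c • (D - Bᴴ * A⁻¹ * B) := by
  have hinv : (c • A)⁻¹ = c⁻¹ • A⁻¹ :=
    inv_eq_left_inv (by simp [smul_smul, hc, nonsing_inv_mul _ hA])
  rw [hinv, conjTranspose_smul, star_trivial]
  simp only [Matrix.smul_mul, Matrix.mul_smul, smul_smul, smul_sub]
  rw [inv_mul_cancel₀ hc, mul_one]

theorem smul_fromBlocks_conjTranspose {α : Type*} [CommSemiring α] [StarRing α] [TrivialStar α]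
    (c : α) (A : Matrix m m α) (B : Matrix m n α) (D : Matrix n n α) :
    c • fromBlocks A B Bᴴ D = fromBlocks (c • A) (c • B) (c • B)ᴴ (c • D) := by
  rw [fromBlocks_smul, conjTranspose_smul, star_trivial]

section RCLike

variable {𝕜 : Type*} [Fintype m] [Fintype n] [DecidableEq m] [RCLike 𝕜]

omit [Fintype m] [Fintype n] [DecidableEq m] in
theorem PosDef.of_fromBlocks_topLeft {A : Matrix m m 𝕜} {B : Matrix m n 𝕜} {C : Matrix n m 𝕜}
    {D : Matrix n n 𝕜} (h : (fromBlocks A B C D).PosDef) : A.PosDef :=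
  h.submatrix (e := Sum.inl) Sum.inl_injective

theorem schurComplement_quadForm_le {A : Matrix m m 𝕜} (B : Matrix m n 𝕜) (D : Matrix n n 𝕜)
    (hA : A.PosDef) (x : m → 𝕜) (y : n → 𝕜) :
    star y ⬝ᵥ ((D - Bᴴ * A⁻¹ * B) *ᵥ y) ≤
      star (Sum.elim x y) ⬝ᵥ (fromBlocks A B Bᴴ D *ᵥ Sum.elim x y) := by
  have := hA.isUnit.invertible
  have hx := hA.posSemidef.dotProduct_mulVec_nonneg (x + (A⁻¹ * B) *ᵥ y)
  rw [dotProduct_mulVec] at hx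
  rw [dotProduct_mulVec, dotProduct_mulVec, schur_complement_eq₁₁ B D x y hA.1]
  exact le_add_of_nonneg_left hx

theorem schurComplement_quadForm_eq {A : Matrix m m 𝕜} (B : Matrix m n 𝕜) (D : Matrix n n 𝕜)
    (hA : A.PosDef) (y : n → 𝕜) :
    star (Sum.elim (-((A⁻¹ * B) *ᵥ y)) y) ⬝ᵥ
        (fromBlocks A B Bᴴ D *ᵥ Sum.elim (-((A⁻¹ * B) *ᵥ y)) y) =
      star y ⬝ᵥ ((D - Bᴴ * A⁻¹ * B) *ᵥ y) := by
  have := hA.isUnit.invertible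
  rw [dotProduct_mulVec, dotProduct_mulVec, schur_complement_eq₁₁ B D _ y hA.1, neg_add_cancel,
    star_zero, zero_vecMul, zero_dotProduct, zero_add]

theorem schurComplement_mono {A A' : Matrix m m 𝕜} {B B' : Matrix m n 𝕜} {D D' : Matrix n n 𝕜}
    (hM : (fromBlocks A B Bᴴ D).PosDef) (hM' : (fromBlocks A' B' B'ᴴ D').PosDef)
    (h : fromBlocks A' B' B'ᴴ D' ≤ fromBlocks A B Bᴴ D) :
    D' - B'ᴴ * A'⁻¹ * B' ≤ D - Bᴴ * A⁻¹ * B := by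
  have hA := hM.of_fromBlocks_topLeft
  have hA' := hM'.of_fromBlocks_topLeft
  have := hA.isUnit.invertible
  have := hA'.isUnit.invertible
  have hS := (IsHermitian.fromBlocks₁₁ B D hA.1).mp hM.1
  have hS' := (IsHermitian.fromBlocks₁₁ B' D' hA'.1).mp hM'.1
  refine .of_dotProduct_mulVec_nonneg (hS.sub hS') fun y => ?_
  -- the minimiser of `x ↦ (x, y)ᴴ (fromBlocks A B Bᴴ D) (x, y)`
  set v := Sum.elim (-((A⁻¹ * B) *ᵥ y)) y
  have hv := h.dotProduct_mulVec_nonneg v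
  rw [sub_mulVec, dotProduct_sub, sub_nonneg] at hv ⊢
  calc star y ⬝ᵥ ((D' - B'ᴴ * A'⁻¹ * B') *ᵥ y)
      ≤ star v ⬝ᵥ (fromBlocks A' B' B'ᴴ D' *ᵥ v) := schurComplement_quadForm_le B' D' hA' _ y
    _ ≤ star v ⬝ᵥ (fromBlocks A B Bᴴ D *ᵥ v) := hv
    _ = star y ⬝ᵥ ((D - Bᴴ * A⁻¹ * B) *ᵥ y) := schurComplement_quadForm_eq B D hA y

end RCLike

end Matrix

theorem stmt_6_general (n m : ℕ)
    (M₁₁ Mt₁₁ : Matrix (Fin n) (Fin n) ℝ) (M₁₂ Mt₁₂ : Matrix (Fin n) (Fin m) ℝ)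
    (M₂₁ Mt₂₁ : Matrix (Fin m) (Fin n) ℝ) (M₂₂ Mt₂₂ : Matrix (Fin m) (Fin m) ℝ)
    (hM : (Matrix.fromBlocks M₁₁ M₁₂ M₂₁ M₂₂).PosDef)
    (hMt : (Matrix.fromBlocks Mt₁₁ Mt₁₂ Mt₂₁ Mt₂₂).PosDef)
    (ε : ℝ)
    (h1 : (Matrix.fromBlocks M₁₁ M₁₂ M₂₁ M₂₂ -
        Real.exp (-ε) • Matrix.fromBlocks Mt₁₁ Mt₁₂ Mt₂₁ Mt₂₂).PosSemidef)
    (h2 : (Real.exp ε • Matrix.fromBlocks Mt₁₁ Mt₁₂ Mt₂₁ Mt₂₂ -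
        Matrix.fromBlocks M₁₁ M₁₂ M₂₁ M₂₂).PosSemidef) :
    ((M₂₂ - M₂₁ * M₁₁⁻¹ * M₁₂) - Real.exp (-ε) • (Mt₂₂ - Mt₂₁ * Mt₁₁⁻¹ * Mt₁₂)).PosSemidef ∧
      (Real.exp ε • (Mt₂₂ - Mt₂₁ * Mt₁₁⁻¹ * Mt₁₂) - (M₂₂ - M₂₁ * M₁₁⁻¹ * M₁₂)).PosSemidef := by
  obtain ⟨-, hB, -, -⟩ := isHermitian_fromBlocks_iff.mp hM.1
  obtain ⟨-, hBt, -, -⟩ := isHermitian_fromBlocks_iff.mp hMt.1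
  subst hB hBt
  have hdet : IsUnit Mt₁₁.det := hMt.of_fromBlocks_topLeft.det_pos.ne'.isUnit
  have hScaled {c : ℝ} (hc : 0 < c) :
      (fromBlocks (c • Mt₁₁) (c • Mt₁₂) (c • Mt₁₂)ᴴ (c • Mt₂₂)).PosDef :=
    smul_fromBlocks_conjTranspose c Mt₁₁ Mt₁₂ Mt₂₂ ▸ hMt.smul hc
  rw [smul_fromBlocks_conjTranspose] at h1 h2
  rw [← schurComplement_smul Mt₁₂ Mt₂₂ (Real.exp_pos _).ne' hdet,
    ← schurComplement_smul Mt₁₂ Mt₂₂ (Real.exp_pos _).ne' hdet]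
  exact ⟨schurComplement_mono hM (hScaled (Real.exp_pos _)) h1,
    schurComplement_mono (hScaled (Real.exp_pos _)) hM h2⟩

theorem stmt_6 (n m : ℕ)
    (M₁₁ Mt₁₁ : Matrix (Fin n) (Fin n) ℝ) (M₁₂ Mt₁₂ : Matrix (Fin n) (Fin m) ℝ)
    (M₂₁ Mt₂₁ : Matrix (Fin m) (Fin n) ℝ) (M₂₂ Mt₂₂ : Matrix (Fin m) (Fin m) ℝ)
    (hM : (Matrix.fromBlocks M₁₁ M₁₂ M₂₁ M₂₂).PosDef)
    (hMt : (Matrix.fromBlocks Mt₁₁ Mt₁₂ Mt₂₁ Mt₂₂).PosDef)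
    (h11 : IsUnit M₁₁) (ht11 : IsUnit Mt₁₁)
    (ε : ℝ) (hε : 0 ≤ ε)
    (h1 : (Matrix.fromBlocks M₁₁ M₁₂ M₂₁ M₂₂ -
        Real.exp (-ε) • Matrix.fromBlocks Mt₁₁ Mt₁₂ Mt₂₁ Mt₂₂).PosSemidef)
    (h2 : (Real.exp ε • Matrix.fromBlocks Mt₁₁ Mt₁₂ Mt₂₁ Mt₂₂ -
        Matrix.fromBlocks M₁₁ M₁₂ M₂₁ M₂₂).PosSemidef) :
    ((M₂₂ - M₂₁ * M₁₁⁻¹ * M₁₂) - Real.exp (-ε) • (Mt₂₂ - Mt₂₁ * Mt₁₁⁻¹ * Mt₁₂)).PosSemidef ∧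
      (Real.exp ε • (Mt₂₂ - Mt₂₁ * Mt₁₁⁻¹ * Mt₁₂) - (M₂₂ - M₂₁ * M₁₁⁻¹ * M₁₂)).PosSemidef :=
  stmt_6_general n m M₁₁ Mt₁₁ M₁₂ Mt₁₂ M₂₁ Mt₂₁ M₂₂ Mt₂₂ hM hMt ε h1 h2
end

section
/- Let D be an n×n positive definite diagonal matrix, and let A, Ã, Â be symmetric n×n matrices with 0 ⪯ Â ⪯ D. If e^{-ε}(D - Ã) ⪯ D - A ⪯ e^{ε}(D - Ã), then e^{-ε}(D - Â D⁻¹ Ã D⁻¹ Â) ⪯ D - Â D⁻¹ A D⁻¹ Â ⪯ e^{ε}(D - Â D⁻¹ Ã D⁻¹ Â). -/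
open Matrix

/-!
With `B = Â D⁻¹`, so that `B X Bᴴ = Â D⁻¹ X D⁻¹ Â` and `B D Bᴴ = Â D⁻¹ Â`, one has for all
scalars `a, b`
`a (D - B X Bᴴ) - b (D - B Y Bᴴ) = (a - b) (D - Â D⁻¹ Â) + B (a (D - X) - b (D - Y)) Bᴴ`.
For `(a, b) = (1, e^{-ε})` and `(e^ε, 1)` both summands are positive semidefinite: the second by
hypothesis, the first because `0 ⪯ Â ⪯ D` implies `Â D⁻¹ Â ⪯ D`.
-/

variable {ι : Type*} [Fintype ι]

namespace Matrix

lemma IsSymm.dotProduct_mulVec_comm {M : Matrix ι ι ℝ} (hM : M.IsSymm) (x y : ι → ℝ) :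
    x ⬝ᵥ (M *ᵥ y) = y ⬝ᵥ (M *ᵥ x) := by
  rw [dotProduct_mulVec, ← mulVec_transpose, hM.eq, dotProduct_comm]

/-- With `y = D⁻¹ B x` one has `x B D⁻¹ B x = y D y = x B y`; expand `(x - y) B (x - y) ≥ 0`
and use `B ⪯ D` at `x` and at `y`. -/
lemma PosSemidef.sub_mul_inv_mul [DecidableEq ι] {D B : Matrix ι ι ℝ} (hD : D.PosDef)
    (hB : B.PosSemidef) (hBD : (D - B).PosSemidef) : (D - B * D⁻¹ * B).PosSemidef := by
  have hBs : B.IsSymm := hB.isHermitian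
  refine .of_dotProduct_mulVec_nonneg ?_ fun x => ?_
  · simpa only [hB.isHermitian.eq] using
      hD.isHermitian.sub (isHermitian_mul_mul_conjTranspose B hD.isHermitian.inv)
  set y := D⁻¹ *ᵥ (B *ᵥ x) with hy
  have hDy : D *ᵥ y = B *ᵥ x := by
    rw [hy, mulVec_mulVec, mul_nonsing_inv D (isUnit_iff_ne_zero.mpr hD.det_pos.ne'), one_mulVec]
  have hxBy : x ⬝ᵥ (B *ᵥ y) = y ⬝ᵥ (D *ᵥ y) := by
    rw [hBs.dotProduct_mulVec_comm, hDy]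
  have hquad : x ⬝ᵥ ((B * D⁻¹ * B) *ᵥ x) = y ⬝ᵥ (D *ᵥ y) := by
    rw [← hxBy, hy, ← mulVec_mulVec, ← mulVec_mulVec]
  have h1 := hBD.dotProduct_mulVec_nonneg y
  have h2 := hB.dotProduct_mulVec_nonneg (x - y)
  have h3 := hBD.dotProduct_mulVec_nonneg x
  simp only [star_trivial, sub_mulVec, mulVec_sub, dotProduct_sub, sub_dotProduct,
    sub_nonneg] at h1 h2 h3 ⊢
  rw [hBs.dotProduct_mulVec_comm y x, hxBy] at h2
  rw [hquad]
  linarith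

lemma smul_sub_conj_eq {R : Type*} [CommRing R] [StarRing R] {D X Y B : Matrix ι ι R}
    (a b : R) :
    a • (D - B * X * Bᴴ) - b • (D - B * Y * Bᴴ) =
      (a - b) • (D - B * D * Bᴴ) + B * (a • (D - X) - b • (D - Y)) * Bᴴ := by
  simp only [Matrix.mul_sub, Matrix.sub_mul, Matrix.mul_smul, Matrix.smul_mul, sub_smul, smul_sub]
  abel

lemma PosSemidef.smul_sub_conj {D X Y B : Matrix ι ι ℝ} {a b : ℝ} (hab : b ≤ a)
    (hD : (D - B * D * Bᴴ).PosSemidef) (h : (a • (D - X) - b • (D - Y)).PosSemidef) :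
    (a • (D - B * X * Bᴴ) - b • (D - B * Y * Bᴴ)).PosSemidef := by
  rw [smul_sub_conj_eq]
  exact (hD.smul (sub_nonneg.mpr hab)).add (h.mul_mul_conjTranspose_same B)

end Matrix

theorem stmt_7_general (n : ℕ) (D A At Ah : Matrix (Fin n) (Fin n) ℝ)
    (hD : D.PosDef)
    (hAh0 : Ah.PosSemidef) (hAhD : (D - Ah).PosSemidef)
    (ε : ℝ) (hε : 0 ≤ ε)
    (h1 : ((D - A) - Real.exp (-ε) • (D - At)).PosSemidef)
    (h2 : (Real.exp ε • (D - At) - (D - A)).PosSemidef) :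
    ((D - Ah * D⁻¹ * A * D⁻¹ * Ah) - Real.exp (-ε) • (D - Ah * D⁻¹ * At * D⁻¹ * Ah)).PosSemidef ∧
      (Real.exp ε • (D - Ah * D⁻¹ * At * D⁻¹ * Ah) - (D - Ah * D⁻¹ * A * D⁻¹ * Ah)).PosSemidef := by
  have hconj : ∀ X, Ah * D⁻¹ * X * (Ah * D⁻¹)ᴴ = Ah * D⁻¹ * X * D⁻¹ * Ah := fun X => by
    rw [conjTranspose_mul, hD.isHermitian.inv.eq, hAh0.isHermitian.eq, ← Matrix.mul_assoc]
  have hcontract : (D - Ah * D⁻¹ * D * (Ah * D⁻¹)ᴴ).PosSemidef := by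
    rw [hconj, Matrix.mul_assoc Ah, nonsing_inv_mul D (isUnit_iff_ne_zero.mpr hD.det_pos.ne'),
      Matrix.mul_one]
    exact hAh0.sub_mul_inv_mul hD hAhD
  constructor
  · simpa only [one_smul, hconj] using
      hcontract.smul_sub_conj (Real.exp_le_one_iff.mpr (neg_nonpos.mpr hε)) (by simpa using h1)
  · simpa only [one_smul, hconj] using
      hcontract.smul_sub_conj (Real.one_le_exp hε) (by simpa using h2)

theorem stmt_7 (n : ℕ) (D A At Ah : Matrix (Fin n) (Fin n) ℝ)
    (hD : D.PosDef) (hDdiag : D.IsDiag)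
    (hA : A.IsSymm) (hAt : At.IsSymm) (hAh : Ah.IsSymm)
    (hAh0 : Ah.PosSemidef) (hAhD : (D - Ah).PosSemidef)
    (ε : ℝ) (hε : 0 ≤ ε)
    (h1 : ((D - A) - Real.exp (-ε) • (D - At)).PosSemidef)
    (h2 : (Real.exp ε • (D - At) - (D - A)).PosSemidef) :
    ((D - Ah * D⁻¹ * A * D⁻¹ * Ah) - Real.exp (-ε) • (D - Ah * D⁻¹ * At * D⁻¹ * Ah)).PosSemidef ∧
      (Real.exp ε • (D - Ah * D⁻¹ * At * D⁻¹ * Ah) - (D - Ah * D⁻¹ * A * D⁻¹ * Ah)).PosSemidef :=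
  stmt_7_general n D A At Ah hD hAh0 hAhD ε hε h1 h2
end

section
/- Let D be a positive definite diagonal matrix and A a symmetric matrix with nonnegative entries such that D - A is a Laplacian matrix (zero row sums). Then for any nonnegative coefficients α₁,…,α_d with Σ α_r = 1, the random-walk matrix polynomial L_α = D - Σ_{r=1}^d α_r D(D⁻¹A)^r is symmetric, has nonpositive off-diagonal entries, and has all row sums equal to zero; hence it is a Laplacian matrix. -/
open Matrix Finset

lemma sum_mulVec_aux {ι : Type*} {n : ℕ} (s : Finset ι) (f : ι → Matrix (Fin n) (Fin n) ℝ)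
    (v : Fin n → ℝ) : (∑ i ∈ s, f i) *ᵥ v = ∑ i ∈ s, f i *ᵥ v := by
  induction s using Finset.cons_induction with
  | empty => simp [Matrix.zero_mulVec]
  | cons a s ha ih => simp [Finset.sum_cons, Matrix.add_mulVec, ih]

theorem stmt_9 (n : ℕ) (D A : Matrix (Fin n) (Fin n) ℝ)
    (hD : D.PosDef) (hDdiag : D.IsDiag) (hA : A.IsSymm)
    (hA0 : ∀ i j, 0 ≤ A i j)
    (hrow : (D - A) *ᵥ (fun _ => (1 : ℝ)) = 0)
    (d : ℕ) (hd : 0 < d) (α : ℕ → ℝ)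
    (hα0 : ∀ r, 0 ≤ α r) (hα1 : ∑ r ∈ Finset.Icc 1 d, α r = 1) :
    (D - ∑ r ∈ Finset.Icc 1 d, α r • (D * (D⁻¹ * A) ^ r)).IsSymm ∧
      (∀ i j, i ≠ j → (D - ∑ r ∈ Finset.Icc 1 d, α r • (D * (D⁻¹ * A) ^ r)) i j ≤ 0) ∧
      (D - ∑ r ∈ Finset.Icc 1 d, α r • (D * (D⁻¹ * A) ^ r)) *ᵥ (fun _ => (1 : ℝ)) = 0 := by
  have hDD : diagonal (diag D) = D := hDdiag.diagonal_diag
  have hdiagpos : ∀ i, 0 < D i i := by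
    intro i
    have := hD
    rw [← hDD] at this
    exact (Matrix.posDef_diagonal_iff.mp this) i
  have hUnit : IsUnit D.det := (Matrix.isUnit_iff_isUnit_det D).mp hD.isUnit
  have hDinvD : D⁻¹ * D = 1 := Matrix.nonsing_inv_mul D hUnit
  have hDDinv : D * D⁻¹ = 1 := Matrix.mul_nonsing_inv D hUnit
  set M := D⁻¹ * A with hM
  -- D⁻¹ entries nonneg
  have hDinv : D⁻¹ = diagonal (fun i => (D i i)⁻¹) := by
    apply Matrix.inv_eq_left_inv
    ext i j
    rw [Matrix.diagonal_mul]
    by_cases h : i = j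
    · subst h; rw [Matrix.one_apply_eq]; exact inv_mul_cancel₀ (hdiagpos i).ne'
    · rw [hDdiag h, mul_zero, Matrix.one_apply_ne h]
  have hDinv0 : ∀ i j, 0 ≤ D⁻¹ i j := by
    intro i j
    rw [hDinv]
    by_cases h : i = j
    · subst h; simp only [diagonal_apply_eq]; exact inv_nonneg.mpr (hdiagpos _).le
    · simp [diagonal_apply_ne _ h]
  have hM0 : ∀ i j, 0 ≤ M i j := by
    intro i j
    rw [hM, Matrix.mul_apply]
    apply Finset.sum_nonneg
    intro k _
    exact mul_nonneg (hDinv0 i k) (hA0 k j)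
  have hMpow0 : ∀ r i j, 0 ≤ (M ^ r) i j := by
    intro r
    induction r with
    | zero => intro i j; by_cases h : i = j
              · subst h; simp [Matrix.one_apply_eq]
              · simp [pow_zero, Matrix.one_apply_ne h]
    | succ r ih =>
        intro i j
        rw [pow_succ, Matrix.mul_apply]
        apply Finset.sum_nonneg
        intro k _
        exact mul_nonneg (ih i k) (hM0 k j)
  -- key identity
  have hkey : ∀ r, D * M ^ (r + 1) = A * M ^ r := by
    intro r
    rw [pow_succ']
    rw [← Matrix.mul_assoc, hM, ← Matrix.mul_assoc, hDDinv, Matrix.one_mul]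
  -- symmetry
  have hDsymm : D.IsSymm := by
    rw [← hDD]; exact (isSymm_diagonal _)
  have hDinvsymm : (D⁻¹).IsSymm := by
    rw [hDinv]; exact (isSymm_diagonal _)
  have hsymm : ∀ r, (D * M ^ r).IsSymm := by
    intro r
    induction r with
    | zero => simpa using hDsymm
    | succ r ih =>
        have : (D * M ^ (r + 1))ᵀ = D * M ^ (r + 1) := by
          calc (D * M ^ (r + 1))ᵀ = (D * M ^ r * M)ᵀ := by rw [pow_succ, Matrix.mul_assoc]
          _ = Mᵀ * (D * M ^ r)ᵀ := by rw [Matrix.transpose_mul]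
          _ = (Aᵀ * D⁻¹ᵀ) * (D * M ^ r) := by rw [hM, Matrix.transpose_mul, ih]
          _ = (A * D⁻¹) * (D * M ^ r) := by rw [hA, hDinvsymm]
          _ = A * (D⁻¹ * D) * M ^ r := by rw [Matrix.mul_assoc, ← Matrix.mul_assoc D⁻¹, Matrix.mul_assoc A]
          _ = A * M ^ r := by rw [hDinvD, Matrix.mul_one]
          _ = D * M ^ (r + 1) := (hkey r).symm
        exact this
  -- row sums
  have hrow' : A *ᵥ (fun _ => (1 : ℝ)) = D *ᵥ (fun _ => (1 : ℝ)) := by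
    have := hrow
    rw [Matrix.sub_mulVec, sub_eq_zero] at this
    exact this.symm
  have hMone : M *ᵥ (fun _ => (1 : ℝ)) = (fun _ => (1 : ℝ)) := by
    rw [hM, ← Matrix.mulVec_mulVec, hrow', Matrix.mulVec_mulVec, hDinvD, Matrix.one_mulVec]
  have hMpowone : ∀ r, (M ^ r) *ᵥ (fun _ => (1 : ℝ)) = (fun _ => (1 : ℝ)) := by
    intro r
    induction r with
    | zero => simp
    | succ r ih => rw [pow_succ, ← Matrix.mulVec_mulVec, hMone, ih]
  refine ⟨?_, ?_, ?_⟩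
  · unfold Matrix.IsSymm
    rw [transpose_sub, transpose_sum, hDsymm]
    congr 1
    apply Finset.sum_congr rfl
    intro r _
    rw [transpose_smul, hsymm r]
  · intro i j hij
    simp only [Matrix.sub_apply, Matrix.sum_apply, Matrix.smul_apply, smul_eq_mul]
    rw [hDdiag hij]
    rw [zero_sub, neg_nonpos]
    apply Finset.sum_nonneg
    intro r hr
    rw [Finset.mem_Icc] at hr
    obtain ⟨r, rfl⟩ := Nat.exists_eq_add_of_le hr.1
    rw [add_comm 1 r, hkey r]
    apply mul_nonneg (hα0 _)
    rw [Matrix.mul_apply]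
    apply Finset.sum_nonneg
    intro k _
    exact mul_nonneg (hA0 i k) (hMpow0 r k j)
  · rw [Matrix.sub_mulVec, sub_eq_zero]
    rw [sum_mulVec_aux]
    have : ∀ r ∈ Finset.Icc 1 d,
        (α r • (D * M ^ r)) *ᵥ (fun _ => (1 : ℝ)) = α r • (D *ᵥ (fun _ => (1 : ℝ))) := by
      intro r _
      rw [Matrix.smul_mulVec, ← Matrix.mulVec_mulVec, hMpowone r]
    rw [Finset.sum_congr rfl this, ← Finset.sum_smul, hα1, one_smul]
end

section
/- Let D be a positive definite diagonal matrix and A symmetric with nonnegative entries such that M = D - A is positive definite and diagonally dominant (an SDDM matrix: for all i, D_{ii} ≥ Σ_j A_{ij}). Then for any nonnegative α₁,…,α_d with Σ α_r = 1, the matrix M_α = D - Σ_{r=1}^d α_r D(D⁻¹A)^r is also symmetric, has nonpositive off-diagonals, and is diagonally dominant (each diagonal entry is at least the sum of absolute values of off-diagonal entries in its row). -/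
open Matrix Finset

theorem stmt_10 (n : ℕ) (D A : Matrix (Fin n) (Fin n) ℝ)
    (hD : D.PosDef) (hDdiag : D.IsDiag) (hA : A.IsSymm)
    (hA0 : ∀ i j, 0 ≤ A i j)
    (hM : (D - A).PosDef)
    (hdom : ∀ i, ∑ j, A i j ≤ D i i)
    (d : ℕ) (hd : 0 < d) (α : ℕ → ℝ)
    (hα0 : ∀ r, 0 ≤ α r) (hα1 : ∑ r ∈ Finset.Icc 1 d, α r = 1) :
    (D - ∑ r ∈ Finset.Icc 1 d, α r • (D * (D⁻¹ * A) ^ r)).IsSymm ∧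
      (∀ i j, i ≠ j → (D - ∑ r ∈ Finset.Icc 1 d, α r • (D * (D⁻¹ * A) ^ r)) i j ≤ 0) ∧
      (∀ i, ∑ j ∈ Finset.univ.erase i,
          |(D - ∑ r ∈ Finset.Icc 1 d, α r • (D * (D⁻¹ * A) ^ r)) i j| ≤
        (D - ∑ r ∈ Finset.Icc 1 d, α r • (D * (D⁻¹ * A) ^ r)) i i) := by
  classical
  have hDeq : Matrix.diagonal D.diag = D := hDdiag.diagonal_diag
  have hDdp : (Matrix.diagonal D.diag).PosDef := by rw [hDeq]; exact hD
  have hf : ∀ i, 0 < D i i := fun i => (Matrix.posDef_diagonal_iff).1 hDdp i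
  -- D⁻¹ is the diagonal of inverses
  have hDinv : D⁻¹ = Matrix.diagonal (fun i => (D i i)⁻¹) := by
    apply Matrix.inv_eq_right_inv
    conv_lhs => rw [← hDeq]
    rw [Matrix.diagonal_mul_diagonal]
    ext i j
    by_cases h : i = j
    · subst h
      simp [Matrix.diag, mul_inv_cancel₀ (hf i).ne']
    · simp [Matrix.diagonal_apply_ne _ h, Matrix.one_apply_ne h]
  set P : Matrix (Fin n) (Fin n) ℝ := D⁻¹ * A with hP
  have hPentry : ∀ i j, P i j = (D i i)⁻¹ * A i j := by
    intro i j
    rw [hP, hDinv, Matrix.diagonal_mul]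
  have hP0 : ∀ i j, 0 ≤ P i j := fun i j => by
    rw [hPentry]; exact mul_nonneg (inv_nonneg.2 (hf i).le) (hA0 i j)
  have hProw : ∀ i, ∑ j, P i j ≤ 1 := by
    intro i
    have : ∑ j, P i j = (D i i)⁻¹ * ∑ j, A i j := by
      rw [Finset.mul_sum]; exact Finset.sum_congr rfl fun j _ => hPentry i j
    rw [this]
    calc (D i i)⁻¹ * ∑ j, A i j ≤ (D i i)⁻¹ * D i i :=
          mul_le_mul_of_nonneg_left (hdom i) (inv_nonneg.2 (hf i).le)
      _ = 1 := inv_mul_cancel₀ (hf i).ne'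
  -- powers of P: nonneg entries and substochastic rows
  have hPr0 : ∀ r, ∀ i j, 0 ≤ (P ^ r) i j := by
    intro r
    induction r with
    | zero => intro i j; by_cases h : i = j <;> simp [pow_zero, Matrix.one_apply, h]
    | succ r ih =>
        intro i j
        rw [pow_succ, Matrix.mul_apply]
        exact Finset.sum_nonneg fun k _ => mul_nonneg (ih i k) (hP0 k j)
  have hPrrow : ∀ r, ∀ i, ∑ j, (P ^ r) i j ≤ 1 := by
    intro r
    induction r with
    | zero => intro i; simp [pow_zero, Matrix.one_apply]
    | succ r ih =>
        intro i
        have : ∑ j, (P ^ (r + 1)) i j = ∑ k, (P ^ r) i k * ∑ j, P k j := by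
          simp only [pow_succ, Matrix.mul_apply, Finset.mul_sum]
          rw [Finset.sum_comm]
        rw [this]
        calc ∑ k, (P ^ r) i k * ∑ j, P k j ≤ ∑ k, (P ^ r) i k * 1 :=
              Finset.sum_le_sum fun k _ =>
                mul_le_mul_of_nonneg_left (hProw k) (hPr0 r i k)
          _ = ∑ k, (P ^ r) i k := by simp
          _ ≤ 1 := ih i
  set B : ℕ → Matrix (Fin n) (Fin n) ℝ := fun r => D * P ^ r with hB
  have hDunit : IsUnit D.det := isUnit_iff_ne_zero.2 hD.det_pos.ne'
  have hDinvD : D⁻¹ * D = 1 := Matrix.nonsing_inv_mul D hDunit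
  have hDDinv : D * D⁻¹ = 1 := Matrix.mul_nonsing_inv D hDunit
  have hBentry : ∀ r i j, (B r) i j = D i i * (P ^ r) i j := by
    intro r i j
    rw [hB]; simp only
    conv_lhs => rw [← hDeq]
    rw [Matrix.diagonal_mul]
    rfl
  have hB0 : ∀ r i j, 0 ≤ (B r) i j := fun r i j => by
    rw [hBentry]; exact mul_nonneg (hf i).le (hPr0 r i j)
  have hBrow : ∀ r i, ∑ j, (B r) i j ≤ D i i := by
    intro r i
    have : ∑ j, (B r) i j = D i i * ∑ j, (P ^ r) i j := by
      rw [Finset.mul_sum]; exact Finset.sum_congr rfl fun j _ => hBentry r i j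
    rw [this]
    calc D i i * ∑ j, (P ^ r) i j ≤ D i i * 1 :=
          mul_le_mul_of_nonneg_left (hPrrow r i) (hf i).le
      _ = D i i := mul_one _
  have hDT : Dᵀ = D := by
    rw [← hDeq]; exact Matrix.diagonal_transpose _
  have hDinvT : (D⁻¹)ᵀ = D⁻¹ := by
    rw [hDinv]; exact Matrix.diagonal_transpose _
  have hBsymm : ∀ r, (B r)ᵀ = B r := by
    intro r
    have key : ∀ r : ℕ, (A * D⁻¹) ^ r * D = D * P ^ r := by
      intro r
      induction r with
      | zero => simp
      | succ r ih =>
          calc (A * D⁻¹) ^ (r + 1) * D = A * D⁻¹ * ((A * D⁻¹) ^ r * D) := by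
                rw [pow_succ']; rw [Matrix.mul_assoc]
            _ = A * D⁻¹ * (D * P ^ r) := by rw [ih]
            _ = A * (D⁻¹ * D) * P ^ r := by
                simp only [Matrix.mul_assoc]
            _ = A * P ^ r := by rw [hDinvD, Matrix.mul_one]
            _ = D * (D⁻¹ * A) * P ^ r := by
                rw [← Matrix.mul_assoc, hDDinv, Matrix.one_mul]
            _ = D * P ^ (r + 1) := by
                rw [hP, pow_succ', Matrix.mul_assoc]
    have hPT : Pᵀ = A * D⁻¹ := by
      rw [hP, Matrix.transpose_mul, hDinvT, hA.eq]
    calc (B r)ᵀ = (P ^ r)ᵀ * Dᵀ := by rw [hB]; exact Matrix.transpose_mul _ _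
      _ = (Pᵀ) ^ r * D := by rw [Matrix.transpose_pow, hDT]
      _ = (A * D⁻¹) ^ r * D := by rw [hPT]
      _ = B r := key r
  set S : Matrix (Fin n) (Fin n) ℝ := ∑ r ∈ Finset.Icc 1 d, α r • (D * (D⁻¹ * A) ^ r) with hS
  have hSB : S = ∑ r ∈ Finset.Icc 1 d, α r • B r := rfl
  have hSentry : ∀ i j, S i j = ∑ r ∈ Finset.Icc 1 d, α r * (B r) i j := by
    intro i j
    rw [hSB, Matrix.sum_apply]
    exact Finset.sum_congr rfl fun r _ => rfl
  have hS0 : ∀ i j, 0 ≤ S i j := by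
    intro i j
    rw [hSentry]
    exact Finset.sum_nonneg fun r _ => mul_nonneg (hα0 r) (hB0 r i j)
  refine ⟨?_, ?_, ?_⟩
  · -- symmetry
    show (D - S)ᵀ = D - S
    rw [Matrix.transpose_sub, hDT, hSB, Matrix.transpose_sum]
    congr 1
    exact Finset.sum_congr rfl fun r _ => by
      rw [Matrix.transpose_smul, hBsymm r]
  · intro i j hij
    have : (D - S) i j = D i j - S i j := rfl
    rw [this, hDdiag hij, zero_sub]
    exact neg_nonpos.2 (hS0 i j)
  · intro i
    have habs : ∀ j ∈ Finset.univ.erase i, |(D - S) i j| = S i j := by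
      intro j hj
      have hij : j ≠ i := (Finset.mem_erase.1 hj).1
      have : (D - S) i j = D i j - S i j := rfl
      rw [this, hDdiag (Ne.symm hij), zero_sub, abs_neg, abs_of_nonneg (hS0 i j)]
    rw [Finset.sum_congr rfl habs]
    have hsplit : ∑ j ∈ Finset.univ.erase i, S i j = (∑ j, S i j) - S i i := by
      rw [← Finset.sum_erase_add _ _ (Finset.mem_univ i)]; ring
    rw [hsplit]
    have hSrow : ∑ j, S i j ≤ D i i := by
      have h1 : ∑ j, S i j = ∑ r ∈ Finset.Icc 1 d, α r * ∑ j, (B r) i j := by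
        simp_rw [hSentry, Finset.mul_sum]
        exact Finset.sum_comm
      rw [h1]
      calc ∑ r ∈ Finset.Icc 1 d, α r * ∑ j, (B r) i j
          ≤ ∑ r ∈ Finset.Icc 1 d, α r * D i i :=
            Finset.sum_le_sum fun r _ =>
              mul_le_mul_of_nonneg_left (hBrow r i) (hα0 r)
        _ = D i i := by rw [← Finset.sum_mul, hα1, one_mul]
    have : (D - S) i i = D i i - S i i := rfl
    rw [this]
    linarith
end

section
/- Let X be a symmetric n×n real matrix with all eigenvalues in the open interval (-1, 1). Then for every odd positive integer r, (1/2)(I - X) ⪯ I - X^r ⪯ r(I - X), and for every even positive integer r = 2k, (I - X²) ⪯ I - X^r ⪯ k(I - X²), where ⪯ denotes the Loewner order. -/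
open Matrix

/-
Each matrix in the statement is `p(X)` for a real polynomial `p`, and `p(X)` is positive
semidefinite as soon as `p ≥ 0` on the spectrum of `X` (functional calculus), so everything
reduces to scalar inequalities on `[-1, 1]`. The upper bounds are Bernoulli's inequality
`1 - t ^ m ≤ m (1 - t)` (applied to `t ^ 2` in the even case); the lower bounds follow from
`t ^ r ≤ t` for `t ∈ [0, 1]`, and for odd `r` from `t ^ r < 0` when `t < 0`.
-/

open scoped ComplexOrder MatrixOrder in
theorem Matrix.IsHermitian.posSemidef_aeval {𝕜 n : Type*} [RCLike 𝕜] [Fintype n] [DecidableEq n]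
    {A : Matrix n n 𝕜} (hA : A.IsHermitian) (p : Polynomial ℝ)
    (hp : ∀ μ ∈ spectrum ℝ A, 0 ≤ p.eval μ) : (Polynomial.aeval A p).PosSemidef := by
  rw [← nonneg_iff_posSemidef, ← cfc_polynomial p A hA]
  exact cfc_nonneg hp

theorem one_sub_pow_le_mul_one_sub {t : ℝ} (ht : -1 ≤ t) (m : ℕ) : 1 - t ^ m ≤ m * (1 - t) := by
  have := one_add_mul_le_pow (a := t - 1) (by linarith) m
  rw [add_sub_cancel] at this
  linarith

theorem one_sub_le_two_mul_one_sub_pow_of_odd {t : ℝ} (ht₁ : -1 ≤ t) (ht₂ : t ≤ 1) {r : ℕ}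
    (hr : Odd r) : 1 - t ≤ 2 * (1 - t ^ r) := by
  rcases le_or_gt 0 t with h₀ | h₀
  · linarith [pow_le_of_le_one h₀ ht₂ hr.pos.ne']
  · linarith [hr.pow_neg h₀]

theorem stmt_19 (n : ℕ) (X : Matrix (Fin n) (Fin n) ℝ) (hX : X.IsSymm)
    (hspec : ∀ μ ∈ spectrum ℝ X, μ ∈ Set.Ioo (-1 : ℝ) 1) :
    (∀ r : ℕ, 0 < r → Odd r →
        ((1 - X ^ r) - (1 / 2 : ℝ) • (1 - X)).PosSemidef ∧
          ((r : ℝ) • (1 - X) - (1 - X ^ r)).PosSemidef) ∧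
      (∀ r k : ℕ, 0 < k → r = 2 * k →
        ((1 - X ^ r) - (1 - X ^ 2)).PosSemidef ∧
          ((k : ℝ) • (1 - X ^ 2) - (1 - X ^ r)).PosSemidef) := by
  have hH : X.IsHermitian := by rwa [IsHermitian, conjTranspose_eq_transpose_of_trivial]
  have key (p : Polynomial ℝ) (hp : ∀ t : ℝ, -1 ≤ t → t ≤ 1 → 0 ≤ p.eval t) :
      (Polynomial.aeval X p).PosSemidef :=
    hH.posSemidef_aeval p fun μ hμ => hp μ (hspec μ hμ).1.le (hspec μ hμ).2.le
  refine ⟨fun r _ hr => ⟨?_, ?_⟩, ?_⟩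
  · have h := key (1 - .X ^ r - (1 / 2 : ℝ) • (1 - .X)) fun t h₁ h₂ => by
      simp only [Polynomial.eval_sub, Polynomial.eval_smul, Polynomial.eval_one,
        Polynomial.eval_pow, Polynomial.eval_X, smul_eq_mul]
      linarith [one_sub_le_two_mul_one_sub_pow_of_odd h₁ h₂ hr]
    simpa using h
  · have h := key ((r : ℝ) • (1 - .X) - (1 - .X ^ r)) fun t h₁ _ => by
      simp only [Polynomial.eval_sub, Polynomial.eval_smul, Polynomial.eval_one,
        Polynomial.eval_pow, Polynomial.eval_X, smul_eq_mul]
      linarith [one_sub_pow_le_mul_one_sub h₁ r]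
    simpa using h
  rintro _ k hk rfl
  constructor
  · have h := key (1 - .X ^ (2 * k) - (1 - .X ^ 2)) fun t h₁ h₂ => by
      simp only [Polynomial.eval_sub, Polynomial.eval_one, Polynomial.eval_pow,
        Polynomial.eval_X, pow_mul]
      linarith [pow_le_of_le_one (sq_nonneg t) (by nlinarith : t ^ 2 ≤ 1) hk.ne']
    simpa using h
  · have h := key ((k : ℝ) • (1 - .X ^ 2) - (1 - .X ^ (2 * k))) fun t h₁ _ => by
      simp only [Polynomial.eval_sub, Polynomial.eval_smul, Polynomial.eval_one,
        Polynomial.eval_pow, Polynomial.eval_X, smul_eq_mul, pow_mul]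
      linarith [one_sub_pow_le_mul_one_sub (by nlinarith : -1 ≤ t ^ 2) k]
    simpa using h
end
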